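/- In the tournament on 2k−1 players where player i beats players i+1,…,i+(k−1) (indices mod 2k−1), for every player i, the coalition S_i = {i, i−1, …, i−(k−1)} can change the outcomes of matches within S_i so that i becomes a Condorcet winner. -/
import Mathlib


abbrev Tournament (n : ℕ) := Fin n → Fin n → Bool

def IsTournament {n : ℕ} (T : Tournament n) : Prop :=
  (∀ i, T i i = false) ∧ ∀ i j : Fin n, i ≠ j → T i j = !T j i

def CondorcetWinner {n : ℕ} (T : Tournament n) (i : Fin n) : Prop :=
  ∀ j, j ≠ i → T i j = true

def PairAdjacent {n : ℕ} (i j : Fin n) (T T' : Tournament n) : Prop :=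
  ∀ a b : Fin n, ¬((a = i ∧ b = j) ∨ (a = j ∧ b = i)) → T a b = T' a b

def SAdjacent {n : ℕ} (S : Finset (Fin n)) (T T' : Tournament n) : Prop :=
  ∀ a b : Fin n, (a ∉ S ∨ b ∉ S) → T a b = T' a b

def IsRule {n : ℕ} (r : Tournament n → Fin n → ℝ) : Prop :=
  ∀ T, IsTournament T → (∀ i, 0 ≤ r T i) ∧ (∑ i, r T i) = 1

def CondorcetConsistent {n : ℕ} (r : Tournament n → Fin n → ℝ) : Prop :=
  ∀ T, IsTournament T → ∀ i, CondorcetWinner T i → r T i = 1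

def SNM2 {n : ℕ} (r : Tournament n → Fin n → ℝ) (α : ℝ) : Prop :=
  ∀ T T' : Tournament n, IsTournament T → IsTournament T' →
    ∀ i j : Fin n, i ≠ j → PairAdjacent i j T T' →
      r T' i + r T' j - r T i - r T j ≤ α

def SNMk {n : ℕ} (k : ℕ) (r : Tournament n → Fin n → ℝ) (α : ℝ) : Prop :=
  ∀ S : Finset (Fin n), S.card ≤ k → ∀ T T' : Tournament n,
    IsTournament T → IsTournament T' → SAdjacent S T T' →
      (∑ i ∈ S, r T' i) - (∑ i ∈ S, r T i) ≤ α

def flipTo {n : ℕ} (i j : Fin n) (T : Tournament n) : Tournament n :=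
  fun a b => if a = i ∧ b = j then true else if a = j ∧ b = i then false else T a b

def winCount {n : ℕ} (T : Tournament n) (i : Fin n) : ℕ :=
  (Finset.univ.filter fun j => T i j = true).card

def cyclicT (m w : ℕ) : Tournament m :=
  fun i j => decide (1 ≤ (j.val + m - i.val) % m ∧ (j.val + m - i.val) % m ≤ w)

def skT (n : ℕ) : Tournament n :=
  fun i j =>
    if i.val = n - 1 ∧ j.val = 0 then true
    else if i.val = 0 ∧ j.val = n - 1 then false
    else decide (i.val < j.val)

def coalition (m k : ℕ) (i : Fin m) : Finset (Fin m) :=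
  Finset.univ.filter fun j => (i.val + m - j.val) % m ≤ k - 1

/-- In the cyclic tournament on 2k-1 players (i beats the next k-1 players), for every
player i the coalition S_i = {i, i-1, ..., i-(k-1)} can change matches within S_i so
that i becomes a Condorcet winner. -/
lemma mod_small (x m : ℕ) (hm : 0 < m) (h : x < 2*m) :
    x % m = if x < m then x else x - m := by
  split
  · exact Nat.mod_eq_of_lt (by omega)
  · rw [Nat.mod_eq_sub_mod (by omega)]
    exact Nat.mod_eq_of_lt (by omega)

lemma self_mod (m a : ℕ) (h : a < m) : (a + m - a) % m = 0 := by
  have : a + m - a = m := by omega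
  simp [this]

lemma cyc_diag {m : ℕ} (w : ℕ) (a : Fin m) : cyclicT m w a a = false := by
  simp [cyclicT, self_mod m a.val a.isLt]

lemma cyc_sum {m : ℕ} (a b : Fin m) (h : a.val ≠ b.val) :
    (b.val + m - a.val) % m + (a.val + m - b.val) % m = m ∧
    1 ≤ (b.val + m - a.val) % m ∧ 1 ≤ (a.val + m - b.val) % m := by
  have hav := a.isLt
  have hbv := b.isLt
  have h1 := mod_small (b.val + m - a.val) m (by omega) (by omega)
  have h2 := mod_small (a.val + m - b.val) m (by omega) (by omega)
  split at h1 <;> split at h2 <;> omega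

lemma cyc_anti (k : ℕ) (hk : 2 ≤ k) (a b : Fin (2*k-1)) (h : a ≠ b) :
    cyclicT (2*k-1) (k-1) a b = !cyclicT (2*k-1) (k-1) b a := by
  have h' : a.val ≠ b.val := fun e => h (Fin.ext e)
  obtain ⟨hs, h1, h2⟩ := cyc_sum a b h'
  simp only [cyclicT, ← decide_not, decide_eq_decide]
  omega

theorem stmt_3 (k : ℕ) (hk : 2 ≤ k) (i : Fin (2*k - 1)) :
    ∃ T' : Tournament (2*k - 1), IsTournament T' ∧
      SAdjacent (coalition (2*k - 1) k i) (cyclicT (2*k - 1) (k - 1)) T' ∧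
      CondorcetWinner T' i := by
  refine ⟨fun a b => if a = i then (if b = i then false else true)
    else if b = i then false else cyclicT (2*k-1) (k-1) a b, ?_, ?_, ?_⟩
  · constructor
    · intro a
      by_cases ha : a = i <;> simp [ha, cyc_diag]
    · intro a b hab
      by_cases ha : a = i
      · subst ha
        simp [hab.symm, fun e => hab (Eq.symm e)]
      · by_cases hb : b = i
        · subst hb
          simp [ha, fun e => ha e]
        · simp only [ha, hb, if_false]
          exact cyc_anti k hk a b hab
  · intro a b hS
    simp only [coalition, Finset.mem_filter, Finset.mem_univ, true_and, not_le] at hS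
    have hself : ∀ c : Fin (2*k-1), (c.val + (2*k-1) - c.val) % (2*k-1) = 0 :=
      fun c => self_mod _ _ c.isLt
    beta_reduce
    by_cases ha : a = i
    · have ha' : a.val = i.val := by rw [ha]
      rw [if_pos ha]
      by_cases hb : b = i
      · have hb' : b.val = i.val := by rw [hb]
        exfalso
        have hab : a.val = b.val := ha'.trans hb'.symm
        rcases hS with hS | hS <;> rw [← ha'] at hS <;> rw [hab] at hS <;>
          rw [hself] at hS <;> omega
      · rw [if_neg hb]
        have h' : a.val ≠ b.val := by
          intro e; exact hb (Fin.ext (e.symm.trans ha'))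
        obtain ⟨hs, h1, h2⟩ := cyc_sum a b h'
        rcases hS with hS | hS
        · rw [← ha', hself] at hS; omega
        · rw [← ha'] at hS
          simp only [cyclicT, decide_eq_true_eq]
          omega
    · rw [if_neg ha]
      by_cases hb : b = i
      · have hb' : b.val = i.val := by rw [hb]
        rw [if_pos hb]
        rcases hS with hS | hS
        · rw [← hb'] at hS
          simp only [cyclicT, decide_eq_false_iff_not]
          omega
        · rw [← hb', hself] at hS; omega
      · rw [if_neg hb]
  · intro j hj
    simp [hj]
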